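/- For every p > 0 there is a constant C > 0 such that for every g ∈ SL₂(ℂ) and every log^p-continuous function u on ℙ¹, the pullback g*u = u ∘ g satisfies [g*u]_{log^p} ≤ C (1 + log^p ‖g‖) [u]_{log^p}. -/

import Mathlib

/-!
Write `dV v w = ‖wedge v w‖ / (‖v‖ ‖w‖)` with `wedge v w = det (v, w)`. For `g ∈ SL(2, ℂ)` the
numerator is invariant, and `‖v‖ ≤ ‖g‖ ‖g v‖`, so `dV (g v) (g w) ≤ ‖g‖² dV v w` and `‖g‖ ≥ 1`.
Since `dV ≤ 1`, taking logarithms gives `log* (dV v w) ≤ (1 + 2 log ‖g‖) log* (dV (g v) (g w))`,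
and `(1 + 2L)^p ≤ 4^p (1 + L^p)` turns this into the bound with `C = 4^p`.
-/

noncomputable section

def matCLM (g : Matrix (Fin 2) (Fin 2) ℂ) :
    EuclideanSpace ℂ (Fin 2) →L[ℂ] EuclideanSpace ℂ (Fin 2) :=
  LinearMap.toContinuousLinearMap (Matrix.toEuclideanLin g)

/-- Distance on `ℙ¹` via representatives. -/
def dV (v w : EuclideanSpace ℂ (Fin 2)) : ℝ :=
  ‖v 0 * w 1 - v 1 * w 0‖ / (‖v‖ * ‖w‖)

def logStar (t : ℝ) : ℝ := 1 + |Real.log t|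

open scoped MatrixGroups ComplexConjugate

section

variable (v w : EuclideanSpace ℂ (Fin 2))

def wedge : ℂ := v 0 * w 1 - v 1 * w 0

lemma dV_eq : dV v w = ‖wedge v w‖ / (‖v‖ * ‖w‖) := rfl

lemma norm_sq_eq_add : ‖v‖ ^ 2 = ‖v 0‖ ^ 2 + ‖v 1‖ ^ 2 := by
  rw [EuclideanSpace.norm_sq_eq, Fin.sum_univ_two]

lemma norm_wedge_le : ‖wedge v w‖ ≤ ‖v‖ * ‖w‖ := by
  have hv := norm_sq_eq_add v
  have hw := norm_sq_eq_add w
  have h : ‖wedge v w‖ ≤ ‖v 0‖ * ‖w 1‖ + ‖v 1‖ * ‖w 0‖ := by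
    simpa only [wedge, norm_mul] using norm_sub_le (v 0 * w 1) (v 1 * w 0)
  nlinarith [sq_nonneg (‖v 0‖ * ‖w 0‖ - ‖v 1‖ * ‖w 1‖), norm_nonneg (v 0), norm_nonneg (v 1),
    norm_nonneg (w 0), norm_nonneg (w 1), mul_nonneg (norm_nonneg v) (norm_nonneg w)]

lemma dV_le_one : dV v w ≤ 1 :=
  div_le_one_of_le₀ (norm_wedge_le v w) (by positivity)

lemma exists_norm_eq_norm_wedge_eq_sq : ∃ w, ‖w‖ = ‖v‖ ∧ ‖wedge v w‖ = ‖v‖ ^ 2 := by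
  refine ⟨!₂[-conj (v 1), conj (v 0)], ?_, ?_⟩
  · rw [← sq_eq_sq₀ (norm_nonneg _) (norm_nonneg _), norm_sq_eq_add, norm_sq_eq_add]
    simp [add_comm]
  · have : wedge v !₂[-conj (v 1), conj (v 0)] = ((‖v‖ ^ 2 : ℝ) : ℂ) := by
      rw [norm_sq_eq_add]
      simp [wedge, Complex.mul_conj, Complex.normSq_eq_norm_sq]
    rw [this, Complex.norm_real, Real.norm_of_nonneg (by positivity)]

lemma matCLM_apply (A : Matrix (Fin 2) (Fin 2) ℂ) (i : Fin 2) :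
    matCLM A v i = A i 0 * v 0 + A i 1 * v 1 := by
  fin_cases i <;> simp [matCLM, Matrix.toLpLin_apply]

lemma wedge_matCLM (A : Matrix (Fin 2) (Fin 2) ℂ) :
    wedge (matCLM A v) (matCLM A w) = A.det * wedge v w := by
  simp only [wedge, matCLM_apply, Matrix.det_fin_two]
  ring

end

section

variable (g : SL(2, ℂ))

lemma wedge_matCLM_SL (v w : EuclideanSpace ℂ (Fin 2)) :
    wedge (matCLM g v) (matCLM g w) = wedge v w := by
  rw [wedge_matCLM, g.prop, one_mul]

/-- That is, `‖g⁻¹‖ ≤ ‖g‖`: pair `v` with a `w` of the same norm and `‖wedge v w‖ = ‖v‖ ^ 2`,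
and use that `g` preserves `wedge`. -/
lemma norm_le_opNorm_mul_norm_matCLM (v : EuclideanSpace ℂ (Fin 2)) :
    ‖v‖ ≤ ‖matCLM g‖ * ‖matCLM g v‖ := by
  obtain ⟨w, hw, hvw⟩ := exists_norm_eq_norm_wedge_eq_sq v
  have hsq : ‖v‖ * ‖v‖ ≤ ‖v‖ * (‖matCLM g‖ * ‖matCLM g v‖) :=
    calc ‖v‖ * ‖v‖ = ‖wedge (matCLM g v) (matCLM g w)‖ := by rw [wedge_matCLM_SL, hvw, sq]
      _ ≤ ‖matCLM g v‖ * ‖matCLM g w‖ := norm_wedge_le _ _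
      _ ≤ ‖matCLM g v‖ * (‖matCLM g‖ * ‖w‖) := by gcongr; exact (matCLM g).le_opNorm w
      _ = ‖v‖ * (‖matCLM g‖ * ‖matCLM g v‖) := by rw [hw]; ring
  rcases (norm_nonneg v).eq_or_lt with hv | hv
  · rw [← hv]; positivity
  · exact le_of_mul_le_mul_left hsq hv

lemma matCLM_ne_zero {v : EuclideanSpace ℂ (Fin 2)} (hv : v ≠ 0) : matCLM g v ≠ 0 := by
  intro h
  have := norm_le_opNorm_mul_norm_matCLM g v
  rw [h, norm_zero, mul_zero] at this
  exact hv (norm_le_zero_iff.mp this)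

lemma one_le_opNorm_matCLM : 1 ≤ ‖matCLM g‖ := by
  set e : EuclideanSpace ℂ (Fin 2) := EuclideanSpace.single 0 1
  have he : ‖e‖ = 1 := by simp [e]
  have h1 := norm_le_opNorm_mul_norm_matCLM g e
  have h2 := (matCLM g).le_opNorm e
  rw [he] at h1 h2
  nlinarith [norm_nonneg (matCLM g)]

lemma dV_matCLM_le {v w : EuclideanSpace ℂ (Fin 2)} (hv : v ≠ 0) (hw : w ≠ 0) :
    dV (matCLM g v) (matCLM g w) ≤ ‖matCLM g‖ ^ 2 * dV v w := by
  have hgv := norm_pos_iff.mpr (matCLM_ne_zero g hv)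
  have hgw := norm_pos_iff.mpr (matCLM_ne_zero g hw)
  have hvw : ‖v‖ * ‖w‖ ≤ ‖matCLM g‖ ^ 2 * (‖matCLM g v‖ * ‖matCLM g w‖) := by
    calc ‖v‖ * ‖w‖ ≤ (‖matCLM g‖ * ‖matCLM g v‖) * (‖matCLM g‖ * ‖matCLM g w‖) := by
          gcongr <;> exact norm_le_opNorm_mul_norm_matCLM g _
      _ = _ := by ring
  rw [dV_eq, dV_eq, wedge_matCLM_SL, mul_div_assoc', div_le_div_iff₀ (by positivity)
    (mul_pos (norm_pos_iff.mpr hv) (norm_pos_iff.mpr hw))]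
  calc ‖wedge v w‖ * (‖v‖ * ‖w‖)
      ≤ ‖wedge v w‖ * (‖matCLM g‖ ^ 2 * (‖matCLM g v‖ * ‖matCLM g w‖)) := by gcongr
    _ = _ := by ring

lemma dV_matCLM_ne_zero {v w : EuclideanSpace ℂ (Fin 2)} (hv : v ≠ 0) (hw : w ≠ 0)
    (hvw : dV v w ≠ 0) : dV (matCLM g v) (matCLM g w) ≠ 0 := by
  rw [dV_eq] at hvw ⊢
  rw [wedge_matCLM_SL]
  exact div_ne_zero (div_ne_zero_iff.mp hvw).1 (mul_ne_zero
    (norm_ne_zero_iff.mpr (matCLM_ne_zero g hv)) (norm_ne_zero_iff.mpr (matCLM_ne_zero g hw)))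

end

lemma logStar_pos (t : ℝ) : 0 < logStar t := by
  unfold logStar; positivity

lemma logStar_le_one_add_log_mul {d D K : ℝ} (hd : 0 < d) (hd1 : d ≤ 1) (hD : 0 < D)
    (hK : 1 ≤ K) (hDK : D ≤ K * d) : logStar d ≤ (1 + Real.log K) * logStar D := by
  have hlogK := Real.log_nonneg hK
  have hlog : Real.log D ≤ Real.log K + Real.log d := by
    rw [← Real.log_mul (by positivity) hd.ne']
    exact Real.log_le_log hD hDK
  rw [logStar, logStar, abs_of_nonpos (Real.log_nonpos hd.le hd1)]
  nlinarith [neg_abs_le (Real.log D), mul_nonneg hlogK (abs_nonneg (Real.log D))]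

lemma one_add_rpow_le {p L : ℝ} (hp : 0 ≤ p) (hL : 0 ≤ L) :
    (1 + L) ^ p ≤ 2 ^ p * (1 + L ^ p) := by
  have hLp := Real.rpow_nonneg hL p
  rcases le_total L 1 with hL1 | hL1
  · calc (1 + L) ^ p ≤ 2 ^ p := Real.rpow_le_rpow (by positivity) (by linarith) hp
      _ ≤ 2 ^ p * (1 + L ^ p) := le_mul_of_one_le_right (by positivity) (by linarith)
  · calc (1 + L) ^ p ≤ (2 * L) ^ p := Real.rpow_le_rpow (by positivity) (by linarith) hp
      _ = 2 ^ p * L ^ p := Real.mul_rpow zero_le_two hL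
      _ ≤ 2 ^ p * (1 + L ^ p) := by gcongr; linarith

lemma one_add_two_mul_rpow_le {p L : ℝ} (hp : 0 ≤ p) (hL : 0 ≤ L) :
    (1 + 2 * L) ^ p ≤ 4 ^ p * (1 + L ^ p) := by
  have h2p : 1 ≤ (2 : ℝ) ^ p := Real.one_le_rpow one_le_two hp
  calc (1 + 2 * L) ^ p ≤ 2 ^ p * (1 + (2 * L) ^ p) := one_add_rpow_le hp (by positivity)
    _ = 2 ^ p * (1 + 2 ^ p * L ^ p) := by rw [Real.mul_rpow zero_le_two hL]
    _ ≤ 2 ^ p * (2 ^ p + 2 ^ p * L ^ p) := by gcongr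
    _ = 4 ^ p * (1 + L ^ p) := by
      rw [show (4 : ℝ) = 2 * 2 by norm_num, Real.mul_rpow zero_le_two zero_le_two]; ring

lemma logStar_dV_rpow_le (g : SL(2, ℂ)) {p : ℝ} (hp : 0 ≤ p) {v w : EuclideanSpace ℂ (Fin 2)}
    (hv : v ≠ 0) (hw : w ≠ 0) (hvw : dV v w ≠ 0) :
    logStar (dV v w) ^ p ≤
      4 ^ p * (1 + Real.log ‖matCLM g‖ ^ p) * logStar (dV (matCLM g v) (matCLM g w)) ^ p := by
  have hg := one_le_opNorm_matCLM g
  have hlog := Real.log_nonneg hg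
  have hd : 0 < dV v w := lt_of_le_of_ne (by rw [dV_eq]; positivity) hvw.symm
  have hD : 0 < dV (matCLM g v) (matCLM g w) :=
    lt_of_le_of_ne (by rw [dV_eq]; positivity) (dV_matCLM_ne_zero g hv hw hvw).symm
  have hstar : logStar (dV v w) ≤
      (1 + 2 * Real.log ‖matCLM g‖) * logStar (dV (matCLM g v) (matCLM g w)) := by
    simpa only [Real.log_pow, Nat.cast_ofNat] using logStar_le_one_add_log_mul hd
      (dV_le_one v w) hD (one_le_pow₀ hg) (dV_matCLM_le g hv hw)
  calc logStar (dV v w) ^ p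
      ≤ ((1 + 2 * Real.log ‖matCLM g‖) * logStar (dV (matCLM g v) (matCLM g w))) ^ p :=
        Real.rpow_le_rpow (logStar_pos _).le hstar hp
    _ = (1 + 2 * Real.log ‖matCLM g‖) ^ p * logStar (dV (matCLM g v) (matCLM g w)) ^ p :=
        Real.mul_rpow (by positivity) (logStar_pos _).le
    _ ≤ _ := by
        gcongr
        · exact Real.rpow_nonneg (logStar_pos _).le p
        · exact one_add_two_mul_rpow_le hp hlog

/-- For every `p > 0` there is `C > 0` such that for every `g ∈ SL₂(ℂ)` and every
`log^p`-continuous function `u` on `ℙ¹` (viewed as a `0`-homogeneous function on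
`ℂ² ∖ {0}`), the pullback `g*u = u ∘ g` satisfies
`[g*u]_{log^p} ≤ C (1 + log^p ‖g‖) [u]_{log^p}`. -/
theorem stmt_5 (p : ℝ) (hp : 0 < p) :
    ∃ C > 0,
      ∀ g : Matrix.SpecialLinearGroup (Fin 2) ℂ,
        ∀ u : EuclideanSpace ℂ (Fin 2) → ℝ,
          (∀ (c : ℂ) (v : EuclideanSpace ℂ (Fin 2)), c ≠ 0 → u (c • v) = u v) →
          ∀ Cu : ℝ, 0 ≤ Cu →
            (∀ v w : EuclideanSpace ℂ (Fin 2), v ≠ 0 → w ≠ 0 → dV v w ≠ 0 →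
              |u v - u w| * logStar (dV v w) ^ p ≤ Cu) →
            ∀ v w : EuclideanSpace ℂ (Fin 2), v ≠ 0 → w ≠ 0 → dV v w ≠ 0 →
              |u (matCLM (g : Matrix (Fin 2) (Fin 2) ℂ) v) -
                  u (matCLM (g : Matrix (Fin 2) (Fin 2) ℂ) w)| *
                  logStar (dV v w) ^ p ≤
                C * (1 + Real.log ‖matCLM (g : Matrix (Fin 2) (Fin 2) ℂ)‖ ^ p) * Cu := by
  refine ⟨4 ^ p, by positivity, fun g u _ Cu _ hu v w hv hw hvw => ?_⟩
  have hlog_norm : 0 ≤ Real.log ‖matCLM g‖ := Real.log_nonneg (one_le_opNorm_matCLM g)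
  calc |u (matCLM g v) - u (matCLM g w)| * logStar (dV v w) ^ p
      ≤ |u (matCLM g v) - u (matCLM g w)| * (4 ^ p * (1 + Real.log ‖matCLM g‖ ^ p) *
          logStar (dV (matCLM g v) (matCLM g w)) ^ p) := by
        gcongr; exact logStar_dV_rpow_le g hp.le hv hw hvw
    _ = 4 ^ p * (1 + Real.log ‖matCLM g‖ ^ p) * (|u (matCLM g v) - u (matCLM g w)| *
          logStar (dV (matCLM g v) (matCLM g w)) ^ p) := by ring
    _ ≤ 4 ^ p * (1 + Real.log ‖matCLM g‖ ^ p) * Cu := by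
        gcongr
        exact hu _ _ (matCLM_ne_zero g hv) (matCLM_ne_zero g hw) (dV_matCLM_ne_zero g hv hw hvw)
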